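/- (Monomial count underlying Lemma 5.4 of Conner–Floyd type.) In MvPolynomial (Fin 3) (ZMod 2) with variables x, y, z, for every integer m ≥ 1 the number of monomials occurring with nonzero coefficient in (x·y + y·z + z·x)^m equals 3^r, i.e. the support of the polynomial (x·y + y·z + z·x)^m has cardinality 3^r, where r is the number of ones in the binary expansion of m (the number of terms in the 2-adic expansion of m). -/

import Mathlib

open MvPolynomial

noncomputable section

abbrev R3 := MvPolynomial (Fin 3) (ZMod 2)

lemma double_inj : Function.Injective (fun d : Fin 3 →₀ ℕ => d + d) := by
  intro d e h
  ext i
  have := DFunLike.congr_fun h i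
  simp [Finsupp.add_apply] at this
  omega

lemma sq_eq_sum (q : R3) :
    q ^ 2 = ∑ d ∈ q.support, monomial (d + d) (q.coeff d) := by
  conv_lhs => rw [q.as_sum]
  rw [sum_pow_char]
  refine Finset.sum_congr rfl fun d _ => ?_
  rw [monomial_pow, two_smul]
  congr 1
  exact ZMod.pow_card _

lemma sq_support (q : R3) :
    (q ^ 2).support = q.support.image (fun d => d + d) := by
  rw [sq_eq_sum]
  have : ((∑ d ∈ q.support, monomial (d + d) (q.coeff d)) : R3).support
      = q.support.biUnion fun d => ((monomial (d + d) (q.coeff d)) : R3).support := by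
    have hc : AddMonoidAlgebra.coeff (∑ d ∈ q.support, (monomial (d + d) (q.coeff d) : R3))
        = ∑ d ∈ q.support, AddMonoidAlgebra.coeff ((monomial (d + d) (q.coeff d)) : R3) := by
      ext e
      simpa [coeff, Finsupp.finset_sum_apply] using
        coeff_sum q.support (fun d => (monomial (d + d) (q.coeff d) : R3)) e
    refine (congrArg Finsupp.support hc).trans
      (Finsupp.support_sum_eq_biUnion _ fun d d' hne => ?_)
    show Disjoint (MvPolynomial.support ((monomial (d + d)) (q.coeff d)))
      (MvPolynomial.support ((monomial (d' + d')) (q.coeff d')))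
    rcases eq_or_ne (q.coeff d) 0 with h0 | h0
    · rw [support_monomial, if_pos h0]; simp
    rcases eq_or_ne (q.coeff d') 0 with h0' | h0'
    · rw [support_monomial (a := q.coeff d'), if_pos h0']; simp
    rw [support_monomial, if_neg h0, support_monomial, if_neg h0']
    simp only [Finset.disjoint_singleton]
    exact fun h => hne (double_inj h)
  rw [this]
  ext e
  simp only [Finset.mem_biUnion, Finset.mem_image]
  constructor
  · rintro ⟨d, hd, he⟩
    rw [support_monomial, if_neg (mem_support_iff.mp hd)] at he
    exact ⟨d, hd, (Finset.mem_singleton.mp he).symm⟩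
  · rintro ⟨d, hd, he⟩
    refine ⟨d, hd, ?_⟩
    rw [support_monomial, if_neg (mem_support_iff.mp hd)]
    exact Finset.mem_singleton.mpr he.symm

lemma sq_support_card (q : R3) : (q ^ 2).support.card = q.support.card := by
  rw [sq_support]
  exact Finset.card_image_of_injective _ double_inj

lemma sq_support_even (q : R3) :
    ∀ e ∈ (q ^ 2).support, ∀ i, Even (e i) := by
  intro e he i
  rw [sq_support, Finset.mem_image] at he
  obtain ⟨d, _, rfl⟩ := he
  exact ⟨d i, rfl⟩

lemma XXmul_mem {a b : Fin 3} {q : R3} {e : Fin 3 →₀ ℕ}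
    (he : e ∈ ((X a * X b) * q).support) :
    ∃ d ∈ q.support, e = Finsupp.single a 1 + (Finsupp.single b 1 + d) := by
  rw [mul_assoc, support_X_mul, support_X_mul] at he
  simp only [Finset.mem_map, addLeftEmbedding_apply] at he
  obtain ⟨x, ⟨d, hd, rfl⟩, rfl⟩ := he
  exact ⟨d, hd, rfl⟩

lemma XXmul_card (a b : Fin 3) (q : R3) :
    ((X a * X b : R3) * q).support.card = q.support.card := by
  rw [mul_assoc, support_X_mul, support_X_mul, Finset.card_map, Finset.card_map]

lemma XXmul_even {a b i : Fin 3} {q : R3} (hq : ∀ e ∈ q.support, ∀ i, Even (e i))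
    {e : Fin 3 →₀ ℕ} (he : e ∈ ((X a * X b) * q).support)
    (hia : i ≠ a) (hib : i ≠ b) : Even (e i) := by
  obtain ⟨d, hd, rfl⟩ := XXmul_mem he
  have := hq d hd i
  simp [Finsupp.single_apply, (Ne.symm hia), (Ne.symm hib)]
  exact this

lemma XXmul_odd {a b : Fin 3} (hab : a ≠ b) {q : R3}
    (hq : ∀ e ∈ q.support, ∀ i, Even (e i))
    {e : Fin 3 →₀ ℕ} (he : e ∈ ((X a * X b) * q).support) : Odd (e a) := by
  obtain ⟨d, hd, rfl⟩ := XXmul_mem he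
  have := hq d hd a
  simp [Finsupp.single_apply, hab.symm]
  obtain ⟨k, hk⟩ := this
  exact ⟨k, by omega⟩

lemma support_add_eq' (p q : R3) (h : Disjoint p.support q.support) :
    (p + q).support = p.support ∪ q.support :=
  Finsupp.support_add_eq h

lemma mulP_card (q : R3) (hq : ∀ e ∈ q.support, ∀ i, Even (e i)) :
    ((X 0 * X 1 + X 1 * X 2 + X 2 * X 0 : R3) * q).support.card = 3 * q.support.card := by
  rw [add_mul, add_mul]
  have d1 : Disjoint ((X 0 * X 1 * q : R3)).support ((X 1 * X 2 * q : R3)).support := by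
    rw [Finset.disjoint_left]
    intro e h1 h2
    have ho : Odd (e 0) := XXmul_odd (by decide) hq h1
    have hev : Even (e 0) := XXmul_even hq h2 (by decide) (by decide)
    exact (Nat.not_even_iff_odd.mpr ho) hev
  have d2 : Disjoint ((X 0 * X 1 * q : R3)).support ((X 2 * X 0 * q : R3)).support := by
    rw [Finset.disjoint_left]
    intro e h1 h2
    have ho : Odd (e 2) := XXmul_odd (by decide) hq h2
    have hev : Even (e 2) := XXmul_even hq h1 (by decide) (by decide)
    exact (Nat.not_even_iff_odd.mpr ho) hev
  have d3 : Disjoint ((X 1 * X 2 * q : R3)).support ((X 2 * X 0 * q : R3)).support := by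
    rw [Finset.disjoint_left]
    intro e h1 h2
    have ho : Odd (e 1) := XXmul_odd (by decide) hq h1
    have hev : Even (e 1) := XXmul_even hq h2 (by decide) (by decide)
    exact (Nat.not_even_iff_odd.mpr ho) hev
  have d12 : Disjoint (((X 0 * X 1 * q : R3)).support ∪ ((X 1 * X 2 * q : R3)).support)
      ((X 2 * X 0 * q : R3)).support := by
    rw [Finset.disjoint_union_left]
    exact ⟨d2, d3⟩
  have d12' : Disjoint ((X 0 * X 1 * q + X 1 * X 2 * q : R3)).support
      ((X 2 * X 0 * q : R3)).support := by
    rw [support_add_eq' _ _ d1]; exact d12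
  rw [support_add_eq' _ _ d12', support_add_eq' _ _ d1,
    Finset.card_union_of_disjoint d12, Finset.card_union_of_disjoint d1,
    XXmul_card, XXmul_card, XXmul_card]
  ring

lemma key : ∀ m : ℕ,
    ((X 0 * X 1 + X 1 * X 2 + X 2 * X 0 : R3) ^ m).support.card
      = 3 ^ ((Nat.digits 2 m).count 1) := by
  intro m
  induction m using Nat.strong_induction_on with
  | _ m ih =>
    rcases Nat.eq_zero_or_pos m with rfl | hm
    · rw [pow_zero]
      have : ((1 : R3)).support = {0} := by
        rw [show (1 : R3) = monomial 0 1 by simp, support_monomial, if_neg one_ne_zero]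
      simp [this]
    have hk : m / 2 < m := Nat.div_lt_self hm (by norm_num)
    have hdig : Nat.digits 2 m = m % 2 :: Nat.digits 2 (m / 2) :=
      Nat.digits_def' (by norm_num) hm
    set p : R3 := X 0 * X 1 + X 1 * X 2 + X 2 * X 0 with hp
    rcases Nat.even_or_odd m with he | ho
    · have h0 : m % 2 = 0 := Nat.even_iff.mp he
      have step : p ^ m = (p ^ (m / 2)) ^ 2 := by
        rw [← pow_mul]; congr 1; omega
      rw [step, sq_support_card, ih _ hk, hdig, h0]
      simp
    · have h1 : m % 2 = 1 := Nat.odd_iff.mp ho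
      have step : p ^ m = p * (p ^ (m / 2)) ^ 2 := by
        rw [← pow_mul, ← pow_succ']
        congr 1
        omega
      rw [step, mulP_card _ (sq_support_even _), sq_support_card, ih _ hk, hdig, h1]
      simp [pow_succ, mul_comm]

end

/-- Monomial count underlying Lemma 5.4 (Conner–Floyd): in
`MvPolynomial (Fin 3) (ZMod 2)`, the support of `(x·y + y·z + z·x)^m` has exactly
`3^r` elements, where `r` is the number of ones in the binary expansion of `m`. -/
theorem support_card_pow_sym2 (m : ℕ) (hm : 1 ≤ m)
    (x y z : MvPolynomial (Fin 3) (ZMod 2))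
    (hx : x = X 0) (hy : y = X 1) (hz : z = X 2) :
    ((x * y + y * z + z * x) ^ m).support.card = 3 ^ ((Nat.digits 2 m).count 1) := by
  subst hx hy hz
  exact key m
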